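/- With G as in the generalized Hilbert construction with α ≥ 1/2, the image G([0,1]) equals the square [−β/(1−α), 1+β/(1−α)]^2, where β = (2α−1)/4; in particular G is space filling. -/

import Mathlib

open Set

/-- Given the values `v0 = h(0)` and `v1 = h(1)`, the unique traversal-order function
(as in Definition 2.1) with these values: `h(2) = -h(0)`, `h(3) = -h(1)`. -/
def hilbertOrder (v0 v1 : ℝ × ℝ) : Fin 4 → ℝ × ℝ := ![v0, v1, -v0, -v1]

/-- The traversal functions `f_{a_1 … a_n}` of the standard Hilbert algorithm, recursing
on the string read backwards (head = last digit `a_n`). -/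
def travRev : List (Fin 4) → Fin 4 → ℝ × ℝ
  | [] => hilbertOrder (-1, -1) (-1, 1)
  | a :: w =>
    let f := travRev w
    if a = 0 then hilbertOrder (f 0) (f 3)
    else if a = 3 then hilbertOrder (f 2) (f 1)
    else f

/-- The traversal function `f_{a_1 … a_n}` associated to the string `a_1 … a_n`. -/
def trav (w : List (Fin 4)) : Fin 4 → ℝ × ℝ := travRev w.reverse

/-- The limit value `G(t)` of the generalized Hilbert curve at the point of the Cantor
set with digit sequence `a`. -/
noncomputable def GHlim (α : ℝ) (a : ℕ → Fin 4) : ℝ × ℝ :=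
  (1 / 2, 1 / 2) + ∑' k : ℕ, (α ^ k / 4) • trav (List.ofFn fun i : Fin k => a i) (a k)

/-- The point of the Cantor set `C_ρ` with digit sequence `a`. -/
noncomputable def cantorPt (ρ : ℝ) (a : ℕ → Fin 4) : ℝ :=
  ((1 - ρ) / (3 * ρ)) * ∑' n : ℕ, (a n : ℝ) * ρ ^ (n + 1)

open Filter Metric Topology

/-!
Write `c = (1/2, 1/2)` and `r = 1/(4(1-α))`; the claimed square is the sup-norm ball
`closedBall c r`. Every traversal function takes its values among the four corners `(±1, ±1)`,
so the series defining `G` on the Cantor set has terms of norm `α^k/4` and sums into that ball.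
Conversely, since each `trav w` hits all four corners, a point `p` of the ball can be reached
greedily: step `k` moves the current partial sum by `α^k/4` towards `p` in each coordinate,
and because `r - 1/4 = r α ≥ 1/4` (this is where `α ≥ 1/2` enters) the error shrinks from
`r α^k` to `r α^(k+1)`. Hence `G` maps the Cantor set onto the ball, and on each gap of the
Cantor set `G` interpolates linearly between two points of the convex ball.
-/

def signVectors : Set (ℝ × ℝ) := ({-1, 1} : Set ℝ) ×ˢ ({-1, 1} : Set ℝ)

lemma range_hilbertOrder (v0 v1 : ℝ × ℝ) :
    range (hilbertOrder v0 v1) = {v0, v1, -v0, -v1} := by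
  simp only [hilbertOrder, Matrix.range_cons, Matrix.range_empty, union_empty, singleton_union]

lemma exists_travRev_eq_hilbertOrder (w : List (Fin 4)) :
    ∃ v0 v1, travRev w = hilbertOrder v0 v1 ∧ {v0, v1, -v0, -v1} = signVectors := by
  induction w with
  | nil =>
    refine ⟨(-1, -1), (-1, 1), rfl, ?_⟩
    ext ⟨x, y⟩
    simp only [signVectors, mem_insert_iff, mem_singleton_iff, Prod.neg_mk, Prod.mk.injEq,
      mem_prod]
    norm_num
    tauto
  | cons a w ih =>
    obtain ⟨v0, v1, hf, hv⟩ := ih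
    rw [← hv]
    by_cases h0 : a = 0
    · refine ⟨v0, -v1, by simp [travRev, h0, hf, hilbertOrder], ?_⟩
      ext; simp only [neg_neg, mem_insert_iff, mem_singleton_iff]; tauto
    by_cases h3 : a = 3
    · refine ⟨-v0, v1, by simp [travRev, h3, hf, hilbertOrder], ?_⟩
      ext; simp only [neg_neg, mem_insert_iff, mem_singleton_iff]; tauto
    · exact ⟨v0, v1, by simp [travRev, h0, h3, hf], rfl⟩

lemma range_trav (w : List (Fin 4)) : range (trav w) = signVectors := by
  obtain ⟨v0, v1, hf, hv⟩ := exists_travRev_eq_hilbertOrder w.reverse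
  rw [trav, hf, range_hilbertOrder, hv]

lemma norm_of_mem_signVectors {v : ℝ × ℝ} (hv : v ∈ signVectors) : ‖v‖ = 1 := by
  simp only [signVectors, mem_prod, mem_insert_iff, mem_singleton_iff] at hv
  obtain ⟨h1 | h1, h2 | h2⟩ := hv <;> simp [Prod.norm_def, h1, h2]

lemma norm_trav (w : List (Fin 4)) (d : Fin 4) : ‖trav w d‖ = 1 :=
  norm_of_mem_signVectors (range_trav w ▸ mem_range_self d)

section series

variable {α : ℝ}

noncomputable def hilbertTerm (α : ℝ) (a : ℕ → Fin 4) (k : ℕ) : ℝ × ℝ :=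
  (α ^ k / 4) • trav (List.ofFn fun i : Fin k => a i) (a k)

lemma norm_hilbertTerm (hα₀ : 0 ≤ α) (a : ℕ → Fin 4) (k : ℕ) :
    ‖hilbertTerm α a k‖ = α ^ k / 4 := by
  rw [hilbertTerm, norm_smul, norm_trav, mul_one, Real.norm_of_nonneg (by positivity)]

lemma hasSum_geometric_div_four (hα₀ : 0 ≤ α) (hα₁ : α < 1) :
    HasSum (fun k : ℕ => α ^ k / 4) ((1 - α)⁻¹ / 4) :=
  (hasSum_geometric_of_lt_one hα₀ hα₁).div_const 4

lemma summable_hilbertTerm (hα₀ : 0 ≤ α) (hα₁ : α < 1) (a : ℕ → Fin 4) :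
    Summable (hilbertTerm α a) :=
  .of_norm_bounded (hasSum_geometric_div_four hα₀ hα₁).summable
    fun k => (norm_hilbertTerm hα₀ a k).le

lemma GHlim_eq_add_tsum (α : ℝ) (a : ℕ → Fin 4) :
    GHlim α a = (1 / 2, 1 / 2) + ∑' k, hilbertTerm α a k := rfl

lemma GHlim_mem_closedBall (hα₀ : 0 ≤ α) (hα₁ : α < 1) (a : ℕ → Fin 4) :
    GHlim α a ∈ closedBall (1 / 2, 1 / 2) ((1 - α)⁻¹ / 4) := by
  rw [mem_closedBall_iff_norm, GHlim_eq_add_tsum, add_sub_cancel_left,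
    ← (hasSum_geometric_div_four hα₀ hα₁).tsum_eq]
  refine (norm_tsum_le_tsum_norm (summable_hilbertTerm hα₀ hα₁ a).norm).trans_eq ?_
  simp_rw [norm_hilbertTerm hα₀]

end series

-- Unlike `Real.sign` it never vanishes, so `Prod.map sgn sgn v` is always a corner.
noncomputable def sgn (x : ℝ) : ℝ := if 0 ≤ x then 1 else -1

lemma abs_sub_mul_sgn_le {x A r : ℝ} (hA : 0 ≤ A) (hr : 1 / 2 ≤ r) (hx : |x| ≤ r * A) :
    |x - A / 4 * sgn x| ≤ (r - 1 / 4) * A := by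
  rw [abs_le] at hx ⊢
  unfold sgn
  split_ifs <;> constructor <;> nlinarith

lemma norm_sub_smul_sgn_le {v : ℝ × ℝ} {A r : ℝ} (hA : 0 ≤ A) (hr : 1 / 2 ≤ r)
    (hv : ‖v‖ ≤ r * A) : ‖v - (A / 4) • Prod.map sgn sgn v‖ ≤ (r - 1 / 4) * A := by
  rw [Prod.norm_def, max_le_iff] at hv ⊢
  exact ⟨abs_sub_mul_sgn_le hA hr hv.1, abs_sub_mul_sgn_le hA hr hv.2⟩

lemma map_sgn_mem_signVectors (v : ℝ × ℝ) : Prod.map sgn sgn v ∈ signVectors := by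
  constructor <;> simp only [Prod.map, sgn] <;> split_ifs <;> simp

noncomputable def greedyDigit (w : List (Fin 4)) (v : ℝ × ℝ) : Fin 4 :=
  (range_trav w ▸ map_sgn_mem_signVectors v : Prod.map sgn sgn v ∈ range (trav w)).choose

lemma trav_greedyDigit (w : List (Fin 4)) (v : ℝ × ℝ) :
    trav w (greedyDigit w v) = Prod.map sgn sgn v :=
  (range_trav w ▸ map_sgn_mem_signVectors v : Prod.map sgn sgn v ∈ range (trav w)).choose_spec

section greedy

variable (α : ℝ) (p : ℝ × ℝ)

noncomputable def greedyState : ℕ → List (Fin 4) × (ℝ × ℝ)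
  | 0 => ([], (1 / 2, 1 / 2))
  | n + 1 =>
    let s := greedyState n
    let d := greedyDigit s.1 (p - s.2)
    (s.1 ++ [d], s.2 + (α ^ n / 4) • trav s.1 d)

noncomputable def greedyDigits (n : ℕ) : Fin 4 :=
  greedyDigit (greedyState α p n).1 (p - (greedyState α p n).2)

lemma greedyState_fst (n : ℕ) :
    (greedyState α p n).1 = List.ofFn fun i : Fin n => greedyDigits α p i := by
  induction n with
  | zero => rfl
  | succ n ih =>
    simp only [List.ofFn_succ_last, Fin.val_castSucc, Fin.val_last, ← ih]
    rfl

lemma greedyState_snd (n : ℕ) :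
    (greedyState α p n).2
      = (1 / 2, 1 / 2) + ∑ k ∈ Finset.range n, hilbertTerm α (greedyDigits α p) k := by
  induction n with
  | zero => simp [greedyState]
  | succ n ih =>
    rw [Finset.sum_range_succ, ← add_assoc, ← ih, hilbertTerm, ← greedyState_fst]
    rfl

end greedy

lemma norm_sub_greedyState_le {α : ℝ} {p : ℝ × ℝ} (hα : 1 / 2 ≤ α) (hα₁ : α < 1)
    (hp : p ∈ closedBall (1 / 2, 1 / 2) ((1 - α)⁻¹ / 4)) (n : ℕ) :
    ‖p - (greedyState α p n).2‖ ≤ (1 - α)⁻¹ / 4 * α ^ n := by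
  induction n with
  | zero => simpa [greedyState, ← dist_eq_norm] using hp
  | succ n ih =>
    have hr : 1 / 2 ≤ (1 - α)⁻¹ / 4 := by
      have : 2 ≤ (1 - α)⁻¹ := by
        rw [le_inv_comm₀ two_pos (by linarith)]
        linarith
      linarith
    have hrα : ((1 - α)⁻¹ / 4 - 1 / 4) * α ^ n = (1 - α)⁻¹ / 4 * α ^ (n + 1) := by
      field_simp [(by linarith : (1 - α) ≠ 0)]
      ring
    set v := p - (greedyState α p n).2
    calc ‖p - (greedyState α p (n + 1)).2‖
        = ‖v - (α ^ n / 4) • Prod.map sgn sgn v‖ := by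
          rw [← trav_greedyDigit, sub_sub]; rfl
      _ ≤ _ := norm_sub_smul_sgn_le (by positivity) hr ih
      _ = _ := hrα

lemma range_GHlim {α : ℝ} (hα : 1 / 2 ≤ α) (hα₁ : α < 1) :
    range (GHlim α) = closedBall (1 / 2, 1 / 2) ((1 - α)⁻¹ / 4) := by
  have hα₀ : 0 ≤ α := by linarith
  refine (range_subset_iff.2 (GHlim_mem_closedBall hα₀ hα₁)).antisymm fun p hp => ?_
  have h_GHlim : Tendsto (fun n => (greedyState α p n).2) atTop
      (𝓝 (GHlim α (greedyDigits α p))) := by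
    simp_rw [greedyState_snd]
    exact (summable_hilbertTerm hα₀ hα₁ _).hasSum.tendsto_sum_nat.const_add _
  have h_p : Tendsto (fun n => (greedyState α p n).2) atTop (𝓝 p) := by
    rw [tendsto_iff_norm_sub_tendsto_zero]
    refine squeeze_zero (fun n => norm_nonneg _)
      (fun n => (norm_sub_rev _ _).trans_le (norm_sub_greedyState_le hα hα₁ hp n)) ?_
    simpa using (tendsto_pow_atTop_nhds_zero_of_lt_one hα₀ hα₁).const_mul ((1 - α)⁻¹ / 4)
  exact ⟨greedyDigits α p, tendsto_nhds_unique h_GHlim h_p⟩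

section cantor

variable {ρ : ℝ}

lemma hasSum_three_mul_pow_succ (hρ₀ : 0 ≤ ρ) (hρ₁ : ρ < 1) :
    HasSum (fun n : ℕ => 3 * ρ ^ (n + 1)) (3 * ρ / (1 - ρ)) := by
  have h := (hasSum_geometric_of_lt_one hρ₀ hρ₁).mul_left (3 * ρ)
  simp_rw [← div_eq_mul_inv, mul_assoc, ← pow_succ'] at h
  exact h

lemma digit_mul_pow_succ_le (hρ₀ : 0 ≤ ρ) (a : ℕ → Fin 4) (n : ℕ) :
    (a n : ℝ) * ρ ^ (n + 1) ≤ 3 * ρ ^ (n + 1) := by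
  gcongr
  exact_mod_cast Fin.is_le (a n)

lemma continuous_cantorPt (hρ₀ : 0 ≤ ρ) (hρ₁ : ρ < 1) : Continuous (cantorPt ρ) := by
  refine continuous_const.mul <| continuous_tsum (fun n => ?_)
    (hasSum_three_mul_pow_succ hρ₀ hρ₁).summable fun n a => ?_
  · fun_prop
  · rw [Real.norm_of_nonneg (by positivity)]
    exact digit_mul_pow_succ_le hρ₀ a n

lemma cantorPt_mem_Icc (hρ₀ : 0 < ρ) (hρ₁ : ρ < 1) (a : ℕ → Fin 4) :
    cantorPt ρ a ∈ Icc (0 : ℝ) 1 := by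
  have hsum := hasSum_three_mul_pow_succ hρ₀.le hρ₁
  have hle : ∑' n, (a n : ℝ) * ρ ^ (n + 1) ≤ 3 * ρ / (1 - ρ) :=
    hasSum_le (digit_mul_pow_succ_le hρ₀.le a)
      (hsum.summable.of_nonneg_of_le (fun n => by positivity)
        (digit_mul_pow_succ_le hρ₀.le a)).hasSum hsum
  have hc : 0 ≤ (1 - ρ) / (3 * ρ) := div_nonneg (by linarith) (by positivity)
  refine ⟨mul_nonneg hc (tsum_nonneg fun n => by positivity), ?_⟩
  calc cantorPt ρ a ≤ (1 - ρ) / (3 * ρ) * (3 * ρ / (1 - ρ)) :=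
        mul_le_mul_of_nonneg_left hle hc
    _ = 1 := by field_simp [(by linarith : 1 - ρ ≠ 0)]

lemma cantorPt_zero : cantorPt ρ 0 = 0 := by
  simp [cantorPt]

lemma cantorPt_three (hρ₀ : 0 < ρ) (hρ₁ : ρ < 1) : cantorPt ρ (fun _ => 3) = 1 := by
  have h3 : ((3 : Fin 4) : ℝ) = 3 := rfl
  rw [cantorPt, h3, (hasSum_three_mul_pow_succ hρ₀.le hρ₁).tsum_eq]
  field_simp [(by linarith : 1 - ρ ≠ 0)]

lemma isClosed_range_cantorPt (hρ₀ : 0 ≤ ρ) (hρ₁ : ρ < 1) :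
    IsClosed (range (cantorPt ρ)) :=
  (isCompact_range (continuous_cantorPt hρ₀ hρ₁)).isClosed

end cantor

lemma IsClosed.exists_gap {C : Set ℝ} (hC : IsClosed C) {s₀ t₀ u : ℝ} (hs₀ : s₀ ∈ C)
    (ht₀ : t₀ ∈ C) (hu : u ∈ Icc s₀ t₀) (huC : u ∉ C) :
    ∃ s ∈ C, ∃ t ∈ C, s₀ ≤ s ∧ s < u ∧ u < t ∧ t ≤ t₀ ∧ Ioo s t ∩ C = ∅ := by
  obtain ⟨s, ⟨hsC, hs₀s, hsu⟩, hs_max⟩ :=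
    (isCompact_Icc.inter_left hC).exists_isGreatest ⟨s₀, hs₀, le_rfl, hu.1⟩
  obtain ⟨t, ⟨htC, hut, htt₀⟩, ht_min⟩ :=
    (isCompact_Icc.inter_left hC).exists_isLeast ⟨t₀, ht₀, hu.2, le_rfl⟩
  have hsu' : s < u := hsu.lt_of_ne (by rintro rfl; exact huC hsC)
  have hut' : u < t := hut.lt_of_ne (by rintro rfl; exact huC htC)
  refine ⟨s, hsC, t, htC, hs₀s, hsu', hut', htt₀, eq_empty_of_forall_notMem ?_⟩
  rintro x ⟨⟨hsx, hxt⟩, hxC⟩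
  rcases le_total x u with hxu | hux
  · exact (hs_max ⟨hxC, hs₀s.trans hsx.le, hxu⟩).not_gt hsx
  · exact (ht_min ⟨hxC, hux, hxt.le.trans htt₀⟩).not_gt hxt

lemma image_Icc_subset_of_affine_on_gaps {E : Type*} [AddCommGroup E] [Module ℝ E]
    {C : Set ℝ} (hC : IsClosed C) (h₀ : 0 ∈ C) (h₁ : 1 ∈ C) {G : ℝ → E} {K : Set E}
    (hK : Convex ℝ K) (hGC : G '' C ⊆ K)
    (hGaff : ∀ s t : ℝ, 0 ≤ s → s < t → t ≤ 1 → Ioo s t ∩ C = ∅ →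
      ∀ u ∈ Icc s t, G u = G s + ((u - s) / (t - s)) • (G t - G s)) :
    G '' Icc 0 1 ⊆ K := by
  rintro _ ⟨u, hu, rfl⟩
  by_cases huC : u ∈ C
  · exact hGC (mem_image_of_mem G huC)
  obtain ⟨s, hsC, t, htC, hs₀, hsu, hut, ht₁, hgap⟩ := hC.exists_gap h₀ h₁ hu huC
  rw [hGaff s t hs₀ (hsu.trans hut) ht₁ hgap u ⟨hsu.le, hut.le⟩]
  refine hK.add_smul_sub_mem (hGC (mem_image_of_mem G hsC)) (hGC (mem_image_of_mem G htC))
    ⟨div_nonneg (by linarith) (by linarith), (div_le_one (by linarith)).2 (by linarith)⟩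

theorem stmt13_general (α ρ : ℝ) (hα1 : 1 / 2 ≤ α) (hα2 : α < 1) (hρ0 : 0 < ρ)
    (hρ1 : ρ < 1 / 4) (β : ℝ) (hβ : β = (2 * α - 1) / 4)
    (G : ℝ → ℝ × ℝ)
    (hGval : ∀ a : ℕ → Fin 4, G (cantorPt ρ a) = GHlim α a)
    (hGlin : ∀ s t : ℝ, 0 ≤ s → s < t → t ≤ 1 →
      Ioo s t ∩ Set.range (cantorPt ρ) = ∅ →
      ∀ u ∈ Icc s t, G u = G s + ((u - s) / (t - s)) • (G t - G s)) :
    G '' Icc (0:ℝ) 1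
      = Icc (-(β / (1 - α))) (1 + β / (1 - α)) ×ˢ
        Icc (-(β / (1 - α))) (1 + β / (1 - α)) := by
  have hρ : ρ < 1 := by linarith
  have hsquare :
      Icc (-(β / (1 - α))) (1 + β / (1 - α)) ×ˢ Icc (-(β / (1 - α))) (1 + β / (1 - α))
        = closedBall ((1 / 2, 1 / 2) : ℝ × ℝ) ((1 - α)⁻¹ / 4) := by
    have h₁ : -(β / (1 - α)) = 1 / 2 - (1 - α)⁻¹ / 4 := by
      rw [hβ]; field_simp [(by linarith : 1 - α ≠ 0)]; ring
    have h₂ : 1 + β / (1 - α) = 1 / 2 + (1 - α)⁻¹ / 4 := by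
      rw [hβ]; field_simp [(by linarith : 1 - α ≠ 0)]; ring
    rw [h₁, h₂, ← Real.closedBall_eq_Icc, closedBall_prod_same]
  have hcantor :
      G '' range (cantorPt ρ) = closedBall ((1 / 2, 1 / 2) : ℝ × ℝ) ((1 - α)⁻¹ / 4) := by
    rw [← range_comp, show G ∘ cantorPt ρ = GHlim α from funext hGval, range_GHlim hα1 hα2]
  rw [hsquare]
  refine (image_Icc_subset_of_affine_on_gaps (isClosed_range_cantorPt hρ0.le hρ)
    ⟨0, cantorPt_zero⟩ ⟨_, cantorPt_three hρ0 hρ⟩ (convex_closedBall _ _) hcantor.le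
    hGlin).antisymm ?_
  rw [← hcantor]
  exact image_mono (range_subset_iff.2 (cantorPt_mem_Icc hρ0 hρ))

/-- For `α ≥ 1/2` the generalized Hilbert curve is space filling: with `β = (2α-1)/4`,
its image is exactly the square `[-β/(1-α), 1+β/(1-α)]²`. -/
theorem stmt13 (α ρ : ℝ) (hα1 : 1 / 2 ≤ α) (hα2 : α < 1) (hρ0 : 0 < ρ)
    (hρ1 : ρ < 1 / 4) (β : ℝ) (hβ : β = (2 * α - 1) / 4)
    (G : ℝ → ℝ × ℝ) (hGcont : ContinuousOn G (Icc 0 1))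
    (hGval : ∀ a : ℕ → Fin 4, G (cantorPt ρ a) = GHlim α a)
    (hGlin : ∀ s t : ℝ, 0 ≤ s → s < t → t ≤ 1 →
      Ioo s t ∩ Set.range (cantorPt ρ) = ∅ →
      ∀ u ∈ Icc s t, G u = G s + ((u - s) / (t - s)) • (G t - G s)) :
    G '' Icc (0:ℝ) 1
      = Icc (-(β / (1 - α))) (1 + β / (1 - α)) ×ˢ
        Icc (-(β / (1 - α))) (1 + β / (1 - α)) :=
  stmt13_general α ρ hα1 hα2 hρ0 hρ1 β hβ G hGval hGlin
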